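/- For the points x_0 = 1/83, x_1 = 1/22, x_2 = 1/11, x_3 = 2/15, x_4 = 2/11, x_5 = 5/22, x_6 = 4/15, the unique even polynomial P of degree 26 satisfying P(x_j) = x_j and P'(x_j) = 1 for j = 0,...,6 has rational coefficients and satisfies P(x) ≥ |x| for all real x. -/

import Mathlib

/-!
Write `P(x) = q(x²)`. The conditions on `P` say exactly that `q` has degree `< 14` and is the
Hermite interpolant of `√` at the double nodes `t_j = x_j²`. Hermite interpolants exist and are
unique over any field, so `q` has rational coefficients, the data `√t_j = x_j` and
`1 / (2 √t_j)` being rational. Applying Rolle's theorem fourteen times gives the remainder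
`√t - q(t) = √⁽¹⁴⁾(ξ) / 14! · ∏ (t - t_j)²`, which is `≤ 0` because the fourteenth derivative
of `√` is negative on `(0, ∞)`. Hence `P(x) = q(x²) ≥ √(x²) = |x|`.
-/

open Polynomial

/-- The seven interpolation nodes. -/
noncomputable def certNodes : Fin 7 → ℝ :=
  ![1/83, 1/22, 1/11, 2/15, 2/11, 5/22, 4/15]

/-- The interpolation conditions for the certificate polynomial: even of degree
at most 26, `P(x_j) = x_j` and `P'(x_j) = 1` for the seven nodes. -/
def certConds (P : Polynomial ℝ) : Prop :=
  P.natDegree ≤ 26 ∧ (∀ i, Odd i → P.coeff i = 0) ∧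
    ∀ j : Fin 7, P.eval (certNodes j) = certNodes j ∧
      P.derivative.eval (certNodes j) = 1

open Finset
open scoped Nat

namespace Polynomial

variable {R : Type*} {ι : Type*} [Fintype ι]

theorem monic_prod_X_sub_C_sq [CommRing R] (v : ι → R) : (∏ i, (X - C (v i)) ^ 2).Monic :=
  monic_prod_of_monic _ _ fun _ _ => (monic_X_sub_C _).pow 2

theorem natDegree_prod_X_sub_C_sq [CommRing R] [Nontrivial R] (v : ι → R) :
    (∏ i, (X - C (v i)) ^ 2).natDegree = 2 * Fintype.card ι := by
  simp [natDegree_prod_of_monic _ _ fun i _ => (monic_X_sub_C (v i)).pow 2,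
    (monic_X_sub_C _).natDegree_pow, mul_comm]

theorem eq_zero_of_degree_lt_of_isRoot_of_isRoot_derivative {K : Type*} [Field K] {v : ι → K}
    (hv : Function.Injective v) {p : K[X]} (hp : p.degree < (2 * Fintype.card ι : ℕ))
    (hroot : ∀ i, p.IsRoot (v i) ∧ p.derivative.IsRoot (v i)) : p = 0 := by
  by_contra h0
  have hdvd : ∀ i, (X - C (v i)) ^ 2 ∣ p := fun i =>
    (pow_dvd_pow _ ((one_lt_rootMultiplicity_iff_isRoot h0).2 (hroot i))).trans
      (p.pow_rootMultiplicity_dvd _)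
  have hprod := Fintype.prod_dvd_of_coprime
    (fun i j hij => ((pairwise_coprime_X_sub_C hv) hij).pow) hdvd
  have := natDegree_le_of_dvd hprod h0
  rw [natDegree_prod_X_sub_C_sq] at this
  exact absurd ((natDegree_lt_iff_degree_lt h0).2 hp) this.not_gt

theorem exists_degree_lt_eval_eq_and_derivative_eval_eq {K : Type*} [Field K] {v : ι → K}
    (hv : Function.Injective v) (y y' : ι → K) :
    ∃ p : K[X], p.degree < (2 * Fintype.card ι : ℕ) ∧
      ∀ i, p.eval (v i) = y i ∧ p.derivative.eval (v i) = y' i := by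
  let Φ : degreeLT K (2 * Fintype.card ι) →ₗ[K] (ι → K) × (ι → K) :=
    ((LinearMap.pi fun i => leval (v i)).prod
      (LinearMap.pi fun i => (leval (v i)).comp derivative)).comp (degreeLT K _).subtype
  have hinj : Function.Injective Φ := by
    rw [← LinearMap.ker_eq_bot, LinearMap.ker_eq_bot']
    intro p hp
    exact Subtype.ext (eq_zero_of_degree_lt_of_isRoot_of_isRoot_derivative hv
      (mem_degreeLT.1 p.2) fun i => ⟨congr_fun (congr_arg Prod.fst hp) i,
        congr_fun (congr_arg Prod.snd hp) i⟩)
  have := (degreeLTEquiv K (2 * Fintype.card ι)).symm.finiteDimensional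
  obtain ⟨p, hp⟩ := (LinearMap.injective_iff_surjective_of_finrank_eq_finrank
    (by simp [(degreeLTEquiv K _).finrank_eq]; ring)).1 hinj (y, y')
  exact ⟨p, mem_degreeLT.1 p.2, fun i =>
    ⟨congr_fun (congr_arg Prod.fst hp) i, congr_fun (congr_arg Prod.snd hp) i⟩⟩

theorem isRoot_and_isRoot_derivative_of_sq_dvd [CommRing R] {p : R[X]}
    {a : R} (h : (X - C a) ^ 2 ∣ p) : p.IsRoot a ∧ p.derivative.IsRoot a :=
  ⟨dvd_iff_isRoot.1 ((dvd_pow_self _ two_ne_zero).trans h),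
    dvd_iff_isRoot.1 (by simpa using pow_sub_one_dvd_derivative_of_pow_dvd h)⟩

theorem iterate_derivative_of_natDegree_le [CommSemiring R] {p : R[X]}
    {n : ℕ} (h : p.natDegree ≤ n) : derivative^[n] p = C (n ! * p.coeff n) := by
  rw [eq_C_of_natDegree_le_zero ((natDegree_iterate_derivative p n).trans (by omega)),
    coeff_iterate_derivative, zero_add, Nat.descFactorial_self, nsmul_eq_mul]

theorem expand_contract_of_coeff_eq_zero [CommSemiring R] {p : ℕ} (hp : p ≠ 0) {f : R[X]}
    (hf : ∀ n, ¬p ∣ n → f.coeff n = 0) : expand R p (contract p f) = f := by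
  ext n
  rw [coeff_expand hp.bot_lt, coeff_contract hp]
  split_ifs with h
  · rw [Nat.div_mul_cancel h]
  · exact (hf n h).symm

theorem iteratedDeriv_eval {𝕜 : Type*} [NontriviallyNormedField 𝕜] (p : 𝕜[X]) (k : ℕ) :
    iteratedDeriv k (fun x => p.eval x) = fun x => (derivative^[k] p).eval x := by
  induction k with
  | zero => rfl
  | succ k ih =>
    ext x
    rw [iteratedDeriv_succ, ih, Function.iterate_succ_apply', Polynomial.deriv]

end Polynomial

section HermiteRemainder

variable {ι : Type*} [Fintype ι] {U : Set ℝ} {f : ℝ → ℝ} {v : ι → ℝ}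

theorem ContDiffOn.continuousOn_iteratedDeriv_of_isOpen {n : ℕ}
    (hf : ContDiffOn ℝ n f U) (hU : IsOpen U) {k : ℕ} (hk : k ≤ n) :
    ContinuousOn (iteratedDeriv k f) U :=
  (hf.continuousOn_iteratedDerivWithin (by exact_mod_cast hk) hU.uniqueDiffOn).congr
    fun _ hx => (iteratedDerivWithin_of_isOpen hU hx).symm

theorem exists_finset_deriv_eq_zero (hU : U.OrdConnected) (hf : ContinuousOn f U)
    (s : Finset ℝ) (hsU : ↑s ⊆ U) (hs : ∀ x ∈ s, f x = 0) :
    ∃ t : Finset ℝ, s.card ≤ t.card + 1 ∧ Disjoint s t ∧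
      ∀ x ∈ t, (∃ a ∈ s, ∃ b ∈ s, a < x ∧ x < b) ∧ deriv f x = 0 := by
  induction s using Finset.induction_on_max with
  | empty => exact ⟨∅, by simp⟩
  | insert a s hlt ih =>
    obtain ⟨t, hcard, hdisj, ht⟩ := ih (fun x hx => hsU (mem_insert_of_mem hx))
      (fun x hx => hs x (mem_insert_of_mem hx))
    rcases s.eq_empty_or_nonempty with rfl | hne
    · exact ⟨∅, by simp⟩
    have hb : s.max' hne ∈ s := s.max'_mem hne
    obtain ⟨c, ⟨hbc, hca⟩, hc⟩ := exists_deriv_eq_zero (hlt _ hb)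
      (hf.mono (hU.out (hsU (mem_insert_of_mem hb)) (hsU (mem_insert_self a s))))
      (by rw [hs _ (mem_insert_of_mem hb), hs a (mem_insert_self a s)])
    have ht_lt : ∀ x ∈ t, x < s.max' hne := fun x hx => by
      obtain ⟨-, -, d, hd, -, hxd⟩ := (ht x hx).1
      exact hxd.trans_le (s.le_max' d hd)
    have hct : c ∉ t := fun h => (ht_lt c h).not_gt hbc
    have hcs : c ∉ s := fun h => (s.le_max' c h).not_gt hbc
    have hat : a ∉ t := fun h => ((ht_lt a h).trans (hlt _ hb)).false
    have has : a ∉ s := fun h => (hlt a h).false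
    refine ⟨insert c t, ?_, ?_, fun x hx => ?_⟩
    · rw [card_insert_of_notMem has, card_insert_of_notMem hct]
      omega
    · simp only [Finset.disjoint_insert_left, Finset.disjoint_insert_right, Finset.mem_insert,
        not_or]
      exact ⟨⟨hca.ne, hcs⟩, hat, hdisj⟩
    · rcases mem_insert.1 hx with rfl | hx
      · exact ⟨⟨_, mem_insert_of_mem hb, a, mem_insert_self a s, hbc, hca⟩, hc⟩
      · obtain ⟨⟨a', ha', b', hb', h1, h2⟩, h3⟩ := ht x hx
        exact ⟨⟨a', mem_insert_of_mem ha', b', mem_insert_of_mem hb', h1, h2⟩, h3⟩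

theorem exists_iteratedDeriv_eq_zero (hU : U.OrdConnected) {n : ℕ}
    (hf : ∀ k < n, ContinuousOn (iteratedDeriv k f) U) {s : Finset ℝ} (hsU : ↑s ⊆ U)
    (hn : n < s.card) (hs : ∀ x ∈ s, f x = 0) : ∃ ξ ∈ U, iteratedDeriv n f ξ = 0 := by
  induction n generalizing f s with
  | zero =>
    obtain ⟨x, hx⟩ := card_pos.1 hn
    exact ⟨x, hsU hx, by rw [iteratedDeriv_zero, hs x hx]⟩
  | succ n ih =>
    obtain ⟨t, hcard, -, ht⟩ := exists_finset_deriv_eq_zero hU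
      (by simpa using hf 0 n.succ_pos) s hsU hs
    simp_rw [iteratedDeriv_succ']
    refine ih (fun k hk => ?_) (fun x hx => ?_) (by omega) (fun x hx => (ht x hx).2)
    · simpa only [iteratedDeriv_succ'] using hf (k + 1) (by omega)
    · obtain ⟨⟨a, ha, b, hb, hax, hxb⟩, -⟩ := ht x hx
      exact hU.out (hsU ha) (hsU hb) ⟨hax.le, hxb.le⟩

theorem exists_iteratedDeriv_eq_zero_of_double_zeros (hU : U.OrdConnected)
    (hf : ∀ k < 2 * Fintype.card ι, ContinuousOn (iteratedDeriv k f) U)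
    (hv : Function.Injective v) (hvU : ∀ i, v i ∈ U) (hfv : ∀ i, f (v i) = 0)
    (hfv' : ∀ i, deriv f (v i) = 0) {t : ℝ} (ht : t ∈ U) (htv : ∀ i, t ≠ v i) (hft : f t = 0) :
    ∃ ξ ∈ U, iteratedDeriv (2 * Fintype.card ι) f ξ = 0 := by
  classical
  rcases (Fintype.card ι).eq_zero_or_pos with hm | hm
  · exact ⟨t, ht, by rw [hm, mul_zero, iteratedDeriv_zero, hft]⟩
  set V := univ.image v
  have hVU : ↑V ⊆ U := by simpa [V, Set.range_subset_iff] using hvU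
  have htV : t ∉ V := by simpa [V] using fun i => (htv i).symm
  have hsU : ↑(insert t V) ⊆ U := by simpa [Set.insert_subset_iff] using ⟨ht, hVU⟩
  -- Rolle between consecutive zeros gives `card ι` zeros of `f'` away from the nodes; together
  -- with the double zeros at the nodes, `f'` has `2 * card ι` zeros.
  obtain ⟨T, hcard, hdisj, hT⟩ := exists_finset_deriv_eq_zero hU
    (by simpa using hf 0 (by omega)) (insert t V) hsU (by simpa [V, hft] using hfv)
  rw [card_insert_of_notMem htV, card_image_of_injective _ hv, card_univ] at hcard
  have hTU : ↑T ⊆ U := fun x hx => by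
    obtain ⟨⟨a, ha, b, hb, hax, hxb⟩, -⟩ := hT x hx
    exact hU.out (hsU ha) (hsU hb) ⟨hax.le, hxb.le⟩
  have hcardTV : 2 * Fintype.card ι - 1 < (T ∪ V).card := by
    rw [card_union_of_disjoint (Finset.disjoint_insert_right.1 hdisj.symm).2,
      card_image_of_injective _ hv, card_univ]
    omega
  have hzeros : ∀ x ∈ T ∪ V, deriv f x = 0 := by
    simpa [V, or_imp, forall_and] using ⟨fun x hx => (hT x hx).2, hfv'⟩
  obtain ⟨ξ, hξ, h⟩ := exists_iteratedDeriv_eq_zero hU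
    (fun k hk => by simpa only [iteratedDeriv_succ'] using hf (k + 1) (by omega))
    (by simpa using Set.union_subset hTU hVU) hcardTV hzeros
  refine ⟨ξ, hξ, ?_⟩
  rwa [show 2 * Fintype.card ι = 2 * Fintype.card ι - 1 + 1 by omega, iteratedDeriv_succ']

theorem exists_iteratedDeriv_eq_factorial_mul_coeff (hUo : IsOpen U) (hU : U.OrdConnected)
    (hf : ContDiffOn ℝ (2 * Fintype.card ι : ℕ) f U) (hv : Function.Injective v)
    (hvU : ∀ i, v i ∈ U) {q : ℝ[X]} (hq : q.natDegree ≤ 2 * Fintype.card ι)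
    (hqf : ∀ i, q.eval (v i) = f (v i)) (hqf' : ∀ i, q.derivative.eval (v i) = deriv f (v i))
    {t : ℝ} (ht : t ∈ U) (htv : ∀ i, t ≠ v i) (hqt : q.eval t = f t) :
    ∃ ξ ∈ U, iteratedDeriv (2 * Fintype.card ι) f ξ =
      (2 * Fintype.card ι)! * q.coeff (2 * Fintype.card ι) := by
  set m := 2 * Fintype.card ι
  have hq_smooth : ContDiff ℝ m fun x => q.eval x := by
    simpa using q.contDiff_aeval (𝕜 := ℝ) m
  set g := fun x => f x - q.eval x
  have hg : ContDiffOn ℝ m g U := hf.sub hq_smooth.contDiffOn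
  have hgv' : ∀ i, deriv g (v i) = 0 := fun i => by
    have hm : m ≠ 0 := by have := Fintype.card_pos_iff.2 ⟨i⟩; omega
    have hfd : DifferentiableAt ℝ f (v i) :=
      (hf.differentiableOn (by exact_mod_cast hm)).differentiableAt (hUo.mem_nhds (hvU i))
    rw [deriv_fun_sub hfd q.differentiableAt, Polynomial.deriv, hqf', sub_self]
  obtain ⟨ξ, hξ, hgξ⟩ := exists_iteratedDeriv_eq_zero_of_double_zeros hU
    (fun k hk => hg.continuousOn_iteratedDeriv_of_isOpen hUo hk.le) hv hvU
    (fun i => sub_eq_zero.2 (hqf i).symm) hgv' ht htv (sub_eq_zero.2 hqt.symm)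
  refine ⟨ξ, hξ, ?_⟩
  rw [iteratedDeriv_fun_sub (hf.contDiffAt (hUo.mem_nhds hξ)) hq_smooth.contDiffAt,
    iteratedDeriv_eval, iterate_derivative_of_natDegree_le hq, sub_eq_zero] at hgξ
  simpa using hgξ

theorem exists_hermite_remainder (hUo : IsOpen U) (hU : U.OrdConnected)
    (hf : ContDiffOn ℝ (2 * Fintype.card ι : ℕ) f U) (hv : Function.Injective v)
    (hvU : ∀ i, v i ∈ U) {p : ℝ[X]} (hp : p.natDegree < 2 * Fintype.card ι)
    (hpf : ∀ i, p.eval (v i) = f (v i)) (hpf' : ∀ i, p.derivative.eval (v i) = deriv f (v i))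
    {t : ℝ} (ht : t ∈ U) :
    ∃ ξ ∈ U, f t - p.eval t =
      iteratedDeriv (2 * Fintype.card ι) f ξ / (2 * Fintype.card ι)! * ∏ i, (t - v i) ^ 2 := by
  by_cases htv : ∃ i, t = v i
  · obtain ⟨i, rfl⟩ := htv
    exact ⟨v i, ht, by rw [hpf, sub_self, prod_eq_zero (mem_univ i) (by simp), mul_zero]⟩
  simp only [not_exists] at htv
  set w : ℝ[X] := ∏ i, (X - C (v i)) ^ 2
  have hw_eval : ∀ x, w.eval x = ∏ i, (x - v i) ^ 2 := by simp [w, eval_prod]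
  have hw_root : ∀ i, w.IsRoot (v i) ∧ w.derivative.IsRoot (v i) := fun i =>
    isRoot_and_isRoot_derivative_of_sq_dvd (dvd_prod_of_mem _ (mem_univ i))
  have hwt : w.eval t ≠ 0 := by
    rw [hw_eval]
    exact prod_ne_zero_iff.2 fun i _ => pow_ne_zero _ (sub_ne_zero.2 (htv i))
  -- `K` is chosen so that `f - (p + K w)` also vanishes at `t`.
  set K := (f t - p.eval t) / w.eval t
  set q := p + C K * w
  have hq : q.natDegree ≤ 2 * Fintype.card ι :=
    natDegree_add_le_of_degree_le hp.le
      ((natDegree_C_mul_le _ _).trans (natDegree_prod_X_sub_C_sq v).le)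
  have hq_coeff : q.coeff (2 * Fintype.card ι) = K := by
    rw [coeff_add, coeff_C_mul, coeff_eq_zero_of_natDegree_lt hp, ← natDegree_prod_X_sub_C_sq v,
      (monic_prod_X_sub_C_sq v).coeff_natDegree, zero_add, mul_one]
  obtain ⟨ξ, hξ, hK⟩ := exists_iteratedDeriv_eq_factorial_mul_coeff hUo hU hf hv hvU hq
    (fun i => by simp [q, hpf, (hw_root i).1.eq_zero])
    (fun i => by simp [q, hpf', (hw_root i).2.eq_zero]) ht htv
    (by simp only [q, eval_add, eval_mul, eval_C, K, div_mul_cancel₀ _ hwt]; ring)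
  refine ⟨ξ, hξ, ?_⟩
  rw [← hw_eval, hK, hq_coeff, mul_div_cancel_left₀ _ (by positivity), div_mul_cancel₀ _ hwt]

end HermiteRemainder

theorem Real.neg_one_pow_mul_iteratedDeriv_succ_sqrt_pos (n : ℕ) {x : ℝ} (hx : 0 < x) :
    0 < (-1) ^ n * iteratedDeriv (n + 1) Real.sqrt x := by
  have hD : 0 < (-1) ^ n * (descPochhammer ℝ (n + 1)).eval (1 / 2 : ℝ) := by
    induction n with
    | zero => norm_num
    | succ n ih =>
      have : (0 : ℝ) < n + 1 - 1 / 2 := by linarith [(n.cast_nonneg : (0 : ℝ) ≤ n)]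
      refine (mul_pos ih this).trans_eq ?_
      rw [descPochhammer_succ_eval (n + 1)]
      push_cast
      ring
  rw [iteratedDeriv_eq_iterate, show Real.sqrt = fun x => x ^ (1 / 2 : ℝ) from
    funext Real.sqrt_eq_rpow, iter_deriv_rpow_const, ← mul_assoc]
  exact mul_pos hD (Real.rpow_pos_of_pos hx _)

def ratNodes : Fin 7 → ℚ :=
  ![1/83, 1/22, 1/11, 2/15, 2/11, 5/22, 4/15]

theorem cast_ratNodes (j : Fin 7) : (ratNodes j : ℝ) = certNodes j := by
  fin_cases j <;> norm_num [ratNodes, certNodes]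

theorem ratNodes_pos (j : Fin 7) : 0 < ratNodes j := by
  fin_cases j <;> norm_num [ratNodes]

theorem strictMono_ratNodes_sq : StrictMono fun j => ratNodes j ^ 2 :=
  Fin.strictMono_iff_lt_succ.2 fun j => by fin_cases j <;> simp [ratNodes] <;> norm_num

theorem certNodes_pos (j : Fin 7) : 0 < certNodes j := by
  rw [← cast_ratNodes]
  exact_mod_cast ratNodes_pos j

theorem injective_certNodes_sq : Function.Injective fun j => certNodes j ^ 2 := by
  have : (fun j => certNodes j ^ 2) = fun j => ((ratNodes j ^ 2 : ℚ) : ℝ) := by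
    funext j
    push_cast [cast_ratNodes]
    rfl
  rw [this]
  exact Rat.cast_injective.comp strictMono_ratNodes_sq.injective

/-- `q` interpolates `√` and its derivative `1 / (2 √t)` at the squared nodes `t_j = x_j ^ 2`;
by `certConds_expand_iff` these are the conditions `certConds` on `P(x) = q(x²)`. -/
def IsSqrtHermiteInterpolant (q : ℝ[X]) : Prop :=
  q.natDegree < 14 ∧ ∀ j, q.eval (certNodes j ^ 2) = certNodes j ∧
    q.derivative.eval (certNodes j ^ 2) * (2 * certNodes j) = 1

theorem certConds_expand_iff (q : ℝ[X]) :
    certConds (expand ℝ 2 q) ↔ IsSqrtHermiteInterpolant q := by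
  simp only [certConds, IsSqrtHermiteInterpolant, natDegree_expand, coeff_expand two_pos,
    Nat.odd_iff, Nat.dvd_iff_mod_eq_zero, ite_eq_right_iff, expand_eval, derivative_expand,
    eval_mul, eval_X, Nat.cast_ofNat, eval_ofNat, Nat.add_one_sub_one, pow_one]
  exact and_congr (by omega) (and_iff_right fun i h1 h0 => by omega)

theorem IsSqrtHermiteInterpolant.unique {q₁ q₂ : ℝ[X]} (h₁ : IsSqrtHermiteInterpolant q₁)
    (h₂ : IsSqrtHermiteInterpolant q₂) : q₁ = q₂ := by
  have hdeg : ∀ {q : ℝ[X]}, IsSqrtHermiteInterpolant q → q.degree < 14 := fun hq =>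
    degree_le_natDegree.trans_lt (by exact_mod_cast hq.1)
  refine sub_eq_zero.1 (eq_zero_of_degree_lt_of_isRoot_of_isRoot_derivative
    injective_certNodes_sq ?_ fun j => ⟨?_, ?_⟩)
  · simpa using (degree_sub_le _ _).trans_lt (max_lt (hdeg h₁) (hdeg h₂))
  · simp [(h₁.2 j).1, (h₂.2 j).1]
  · have h2x : 2 * certNodes j ≠ 0 := by positivity [certNodes_pos j]
    simpa [sub_eq_zero] using mul_right_cancel₀ h2x ((h₁.2 j).2.trans (h₂.2 j).2.symm)

theorem IsSqrtHermiteInterpolant.sqrt_le_eval {q : ℝ[X]} (hq : IsSqrtHermiteInterpolant q)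
    {t : ℝ} (ht : 0 ≤ t) : √t ≤ q.eval t := by
  have hval : ∀ j, q.eval (certNodes j ^ 2) = √(certNodes j ^ 2) := fun j => by
    rw [(hq.2 j).1, Real.sqrt_sq (certNodes_pos j).le]
  have hder : ∀ j, q.derivative.eval (certNodes j ^ 2) = deriv (√·) (certNodes j ^ 2) :=
    fun j => by
    rw [(Real.hasDerivAt_sqrt (pow_pos (certNodes_pos j) 2).ne').deriv,
      Real.sqrt_sq (certNodes_pos j).le]
    exact eq_one_div_of_mul_eq_one_left (hq.2 j).2
  have hpos : ∀ t ∈ Set.Ioi (0 : ℝ), √t ≤ q.eval t := by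
    intro x hx
    obtain ⟨ξ, hξ, h⟩ := exists_hermite_remainder isOpen_Ioi Set.ordConnected_Ioi
      (fun x hx => (Real.contDiffAt_sqrt (ne_of_gt hx)).contDiffWithinAt)
      injective_certNodes_sq (fun j => pow_pos (certNodes_pos j) 2) (by simpa using hq.1)
      hval hder hx
    have hD : iteratedDeriv 14 (√·) ξ < 0 := by
      have := Real.neg_one_pow_mul_iteratedDeriv_succ_sqrt_pos 13 hξ
      norm_num at this
      linarith
    simp only [Fintype.card_fin, Nat.reduceMul] at h
    have : iteratedDeriv 14 (√·) ξ / (14 ! : ℕ) * ∏ j, (x - certNodes j ^ 2) ^ 2 ≤ 0 :=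
      mul_nonpos_of_nonpos_of_nonneg (div_nonpos_of_nonpos_of_nonneg hD.le (by positivity))
        (prod_nonneg fun j _ => sq_nonneg _)
    linarith
  exact (isClosed_le Real.continuous_sqrt q.continuous).closure_subset_iff.2 hpos
    (by rwa [closure_Ioi])

theorem exists_rat_isSqrtHermiteInterpolant :
    ∃ p : ℚ[X], IsSqrtHermiteInterpolant (p.map (algebraMap ℚ ℝ)) := by
  obtain ⟨p, hdeg, hp⟩ := exists_degree_lt_eval_eq_and_derivative_eval_eq
    strictMono_ratNodes_sq.injective ratNodes fun j => 1 / (2 * ratNodes j)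
  refine ⟨p, ?_, fun j => ?_⟩
  · rcases eq_or_ne p 0 with rfl | h0
    · simp
    · rw [natDegree_map, natDegree_lt_iff_degree_lt h0]
      simpa using hdeg
  · have hcast : ∀ (f : ℚ[X]) (r : ℚ), (f.map (algebraMap ℚ ℝ)).eval (r : ℝ) = f.eval r :=
      fun f r => by rw [eval_map, ← eq_ratCast (algebraMap ℚ ℝ), eval₂_hom, eq_ratCast]
    have hr := ratNodes_pos j
    rw [← cast_ratNodes, derivative_map, ← Rat.cast_pow, hcast, hcast, (hp j).1, (hp j).2]
    refine ⟨rfl, ?_⟩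
    push_cast
    field_simp

theorem cert_polynomial_exists :
    ∃ P : Polynomial ℝ,
      (certConds P ∧ (∀ i, ∃ q : ℚ, P.coeff i = (q : ℝ)) ∧
        ∀ y : ℝ, |y| ≤ P.eval y) ∧
      ∀ Q : Polynomial ℝ, certConds Q → Q = P := by
  obtain ⟨p, hp⟩ := exists_rat_isSqrtHermiteInterpolant
  have hcoeff : ∀ i, (expand ℝ 2 (p.map (algebraMap ℚ ℝ))).coeff i = (expand ℚ 2 p).coeff i :=
    fun i => by rw [← Polynomial.map_expand, coeff_map, eq_ratCast]
  refine ⟨_, ⟨(certConds_expand_iff _).2 hp, fun i => ⟨_, hcoeff i⟩, fun y => ?_⟩,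
    fun Q hQ => ?_⟩
  · rw [expand_eval, ← Real.sqrt_sq_eq_abs]
    exact hp.sqrt_le_eval (sq_nonneg y)
  · have hQ' : expand ℝ 2 (contract 2 Q) = Q := expand_contract_of_coeff_eq_zero two_ne_zero
      fun n hn => hQ.2.1 n (Nat.odd_iff.2 (Nat.two_dvd_ne_zero.1 hn))
    rw [← hQ', ((certConds_expand_iff (contract 2 Q)).1 (by rwa [hQ'])).unique hp]
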